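/- For every z ∈ ℂ∖[0,1], the complex number 2 + (2z−1)/w(z) is not a real number lying in (−∞,0]. -/
import Mathlib


open Complex Metric

/-- `w(z) = z·((z−1)/z)^{1/2}` with the principal square root. -/
noncomputable def wfun (z : ℂ) : ℂ := z * ((z - 1) / z) ^ ((1 : ℂ)/2)

/-- For `z` off the real segment `[0,1]`, the value `2 + (2z−1)/w(z)` is
never a real number in `(−∞,0]`. -/
theorem stmt_8 :
    ∀ z ∈ (Complex.ofReal '' Set.Icc (0:ℝ) 1)ᶜ,
      (2 + (2 * z - 1) / wfun z) ∉ (Complex.ofReal '' Set.Iic 0) := by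
  rintro z hz ⟨x, hx, heq⟩
  simp only [Set.mem_Iic] at hx
  have hz0 : z ≠ 0 := by
    rintro rfl
    exact hz ⟨0, by constructor <;> norm_num, by norm_num⟩
  have hz1 : z ≠ 1 := by
    rintro rfl
    exact hz ⟨1, by constructor <;> norm_num, by norm_num⟩
  set s : ℂ := ((z - 1) / z) ^ ((1 : ℂ)/2) with hs
  have hbase : (z - 1) / z ≠ 0 := div_ne_zero (sub_ne_zero.2 hz1) hz0
  have hs0 : s ≠ 0 := by
    rw [hs, Ne, Complex.cpow_eq_zero_iff]
    tauto
  have hs2 : s * s = (z - 1) / z := by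
    rw [hs, ← Complex.cpow_add _ _ hbase]
    norm_num
  have hw0 : wfun z ≠ 0 := mul_ne_zero hz0 hs0
  have hw2 : wfun z ^ 2 = z * (z - 1) := by
    show (z * s) ^ 2 = z * (z - 1)
    have h' : (z * s) ^ 2 = z * z * (s * s) := by ring
    rw [h', hs2]
    field_simp
  set u : ℝ := x - 2 with hu
  have hule : u ≤ -2 := by simp only [hu]; linarith
  have ht : 2 * z - 1 = (u : ℂ) * wfun z := by
    have h1 : (2 * z - 1) / wfun z = (u : ℂ) := by
      simp only [hu]
      push_cast
      linear_combination -heq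
    field_simp at h1
    linear_combination h1
  have key : ((u ^ 2 - 4 : ℝ) : ℂ) * (z * (z - 1)) = 1 := by
    have h1 : (2 * z - 1) ^ 2 = (u : ℂ) ^ 2 * (z * (z - 1)) := by
      rw [ht, ← hw2]; ring
    push_cast
    linear_combination -h1
  have hr : 0 < u ^ 2 - 4 := by
    rcases lt_or_eq_of_le (by nlinarith : (0:ℝ) ≤ u ^ 2 - 4) with h | h
    · exact h
    · exfalso
      rw [← h] at key
      norm_num at key
  have hz2 : z * (z - 1) = ((1 / (u ^ 2 - 4) : ℝ) : ℂ) := by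
    have hne : ((u ^ 2 - 4 : ℝ) : ℂ) ≠ 0 := by
      exact_mod_cast ne_of_gt hr
    rw [Complex.ofReal_div, Complex.ofReal_one, eq_div_iff hne]
    linear_combination key
  have hrpos : 0 < 1 / (u ^ 2 - 4) := by positivity
  set r : ℝ := 1 / (u ^ 2 - 4) with hrdef
  have him : z.im * (2 * z.re - 1) = 0 := by
    have := congrArg Complex.im hz2
    simp [Complex.mul_im, Complex.sub_im, Complex.sub_re] at this
    linarith [this]
  have hre : z.re * (z.re - 1) - z.im * z.im = r := by
    have := congrArg Complex.re hz2
    simpa [Complex.mul_re, Complex.sub_im, Complex.sub_re] using this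
  rcases mul_eq_zero.1 him with hy | hx2
  · -- z is real
    set a : ℝ := z.re with ha
    have hzre : z = (a : ℂ) := by
      apply Complex.ext <;> simp [ha, hy]
    have haa : a * (a - 1) = r := by
      rw [← hre, hy]; ring
    have haa' : 0 < a * (a - 1) := haa ▸ hrpos
    have ha0 : a ≠ 0 := by
      intro h; rw [h] at haa'; norm_num at haa'
    -- compute w for real z
    set b : ℝ := (a - 1) / a with hb
    have hbpos : 0 < b := by
      rw [hb]
      rcases lt_or_gt_of_ne ha0 with h | h
      · apply div_pos_of_neg_of_neg <;> nlinarith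
      · apply div_pos <;> nlinarith
    set c : ℝ := b ^ ((1:ℝ)/2) with hc
    have hcpos : 0 < c := Real.rpow_pos_of_pos hbpos _
    have hc2 : c * c = b := by
      rw [hc, ← Real.rpow_add hbpos]
      norm_num
    have hsc : s = (c : ℂ) := by
      rw [hs, hzre]
      have : ((a : ℂ) - 1) / (a : ℂ) = ((b : ℝ) : ℂ) := by
        rw [hb]; push_cast; ring
      rw [this]
      rw [show ((1:ℂ)/2) = (((1/2:ℝ) : ℝ) : ℂ) by norm_num]
      rw [← Complex.ofReal_cpow (le_of_lt hbpos)]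
    have hwre : wfun z = ((a * c : ℝ) : ℂ) := by
      show z * s = _
      rw [hzre, hsc]; push_cast; ring
    have hreal : 2 * a - 1 = u * (a * c) := by
      have := ht
      rw [hwre, hzre] at this
      exact_mod_cast this
    have hac2 : a * (c * c) = a - 1 := by
      rw [hc2, hb]; field_simp
    -- sign contradiction
    have h2a : 0 < 2 * a ^ 2 - a := by nlinarith
    nlinarith [mul_pos h2a hcpos, mul_pos haa' (mul_pos hcpos hcpos), hule, sq_nonneg c]
  · -- Re z = 1/2 case
    have : r < 0 := by nlinarith [sq_nonneg z.im]
    linarith
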